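/- Let 𝔫 be the 5-dimensional real Lie algebra l₅,₇ (case A) with orthonormal basis {E₁,…,E₅} and non-zero brackets [E₁,E₂] = m·E₃ + u·E₅, [E₁,E₃] = v·E₄ + w·E₅, [E₁,E₄] = x·E₅, where m, v, x > 0, u ∈ ℝ and w ≥ 0. Then there exist c ∈ ℝ and a derivation D of 𝔫 with Ric = c·Id + D if and only if x = m, u = 0, w = 0 and v = (2/√3)·m; moreover, in that case necessarily c = −2m². -/

import Mathlib

/-! In the basis `E` the Ricci operator is an explicit symmetric matrix, so a decomposition
`Ric = c • id + D` determines `D = Ric - c • id`. Testing the derivation identity on the brackets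
`[E₁,E₂]`, `[E₁,E₃]`, `[E₁,E₄]` gives five polynomial equations; as `m, v, x > 0` they force
`u = w = 0` and `2c = -(3m² + x²) = -3v² = -(m² + 3x²)`, whence `x = m`, `v² = 4m²/3` and
`c = -2m²`. Conversely, for these parameters `Ric + 2m² • id` is diagonal with eigenvalues
`m²/6 • (2, 9, 11, 13, 15)`, and a diagonal map whose eigenvalues add along the brackets
(`2 + 9 = 11`, `2 + 11 = 13`, `2 + 13 = 15`) is a derivation. -/

open scoped BigOperators

namespace Nilsoliton5

noncomputable section

abbrev V : Type := Fin 5 → ℝ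

/-- The orthonormal basis vectors E₁,…,E₅ (indexed 0,…,4). -/
def E (i : Fin 5) : V := Pi.single i 1

/-- The inner product making `E` an orthonormal basis. -/
def ip (x y : V) : ℝ := ∑ i, x i * y i

/-- `D` is a derivation of the bracket `br`. -/
def IsDerivation (br : V → V → V) (D : V →ₗ[ℝ] V) : Prop :=
  ∀ X Y : V, D (br X Y) = br (D X) Y + br X (D Y)

/-- `Ric` is the Ricci operator of the nilpotent Lie group with left-invariant
metric determined by the bracket `br` and the orthonormal basis `E`. -/
def IsRicci (br : V → V → V) (Ric : V →ₗ[ℝ] V) : Prop :=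
  ∀ X Y : V, ip (Ric X) Y =
      -(1/2) * (∑ i : Fin 5, ip (br X (E i)) (br Y (E i)))
      + (1/4) * (∑ i : Fin 5, ∑ j : Fin 5, ip (br (E i) (E j)) X * ip (br (E i) (E j)) Y)

/-- The bracket of l₅,₇ (case A): [E₁,E₂] = m·E₃ + u·E₅,
[E₁,E₃] = v·E₄ + w·E₅, [E₁,E₄] = x·E₅. -/
def br (m u v w x : ℝ) (X Y : V) : V :=
  (m * (X 0 * Y 1 - X 1 * Y 0)) • E 2 + (v * (X 0 * Y 2 - X 2 * Y 0)) • E 3 + (u * (X 0 * Y 1 - X 1 * Y 0) + w * (X 0 * Y 2 - X 2 * Y 0) + x * (X 0 * Y 3 - X 3 * Y 0)) • E 4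


open Matrix

lemma E_apply (i j : Fin 5) : E i j = if j = i then 1 else 0 := Pi.single_apply i 1 j

lemma ip_E (z : V) (i : Fin 5) : ip z (E i) = z i := by
  simp [ip, E_apply]

lemma ip_eq (z y : V) : ip z y = z 0 * y 0 + z 1 * y 1 + z 2 * y 2 + z 3 * y 3 + z 4 * y 4 := by
  simp [ip, Fin.sum_univ_five]

lemma eq_two_div_sqrt_three_mul_iff {v m : ℝ} (hv : 0 ≤ v) (hm : 0 ≤ m) :
    v = 2 / Real.sqrt 3 * m ↔ v ^ 2 = 4 / 3 * m ^ 2 := by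
  have h : (2 / Real.sqrt 3 * m) ^ 2 = 4 / 3 * m ^ 2 := by
    rw [mul_pow, div_pow, Real.sq_sqrt (by norm_num)]
    norm_num
  rw [← h, pow_left_inj₀ hv (by positivity) two_ne_zero]

section Bracket

variable (m u v w x : ℝ)

lemma br_apply (X Y : V) (k : Fin 5) :
    br m u v w x X Y k =
      (if k = 2 then m * (X 0 * Y 1 - X 1 * Y 0) else 0)
      + (if k = 3 then v * (X 0 * Y 2 - X 2 * Y 0) else 0)
      + (if k = 4 then u * (X 0 * Y 1 - X 1 * Y 0) + w * (X 0 * Y 2 - X 2 * Y 0)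
          + x * (X 0 * Y 3 - X 3 * Y 0) else 0) := by
  simp [br, E_apply]

def ricciMatrix : Matrix (Fin 5) (Fin 5) ℝ :=
  !![-(m^2 + u^2 + v^2 + w^2 + x^2) / 2, 0, 0, 0, 0;
     0, -(m^2 + u^2) / 2, -(u * w) / 2, -(u * x) / 2, 0;
     0, -(u * w) / 2, (m^2 - v^2 - w^2) / 2, -(w * x) / 2, m * u / 2;
     0, -(u * x) / 2, -(w * x) / 2, (v^2 - x^2) / 2, v * w / 2;
     0, 0, m * u / 2, v * w / 2, (u^2 + w^2 + x^2) / 2]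

variable {m u v w x}

lemma IsRicci.apply_E_apply {Ric : V →ₗ[ℝ] V} (hRic : IsRicci (br m u v w x) Ric) (i j : Fin 5) :
    Ric (E j) i = ricciMatrix m u v w x i j := by
  rw [← ip_E (Ric (E j)) i, hRic]
  fin_cases i <;> fin_cases j <;>
    simp [ip_eq, Fin.sum_univ_five, br_apply, E_apply, ricciMatrix] <;> ring

lemma IsRicci.eq_toLin' {Ric : V →ₗ[ℝ] V} (hRic : IsRicci (br m u v w x) Ric) :
    Ric = toLin' (ricciMatrix m u v w x) := by
  rw [← toLin'_toMatrix' Ric]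
  congr 1
  ext i j
  exact hRic.apply_E_apply i j

lemma IsDerivation.soliton_equations {Ric D : V →ₗ[ℝ] V} {c : ℝ}
    (hRic : IsRicci (br m u v w x) Ric) (hD : IsDerivation (br m u v w x) D)
    (hc : Ric = c • LinearMap.id + D) :
    m * u * x = 0 ∧ v * w * x = 0 ∧ m * (2 * c + 3 * m ^ 2 + 3 * u ^ 2 + x ^ 2) = 0 ∧
      v * (2 * c + u ^ 2 + 3 * v ^ 2 + 3 * w ^ 2) = 0 ∧
      x * (2 * c + m ^ 2 + 3 * u ^ 2 + 3 * w ^ 2 + 3 * x ^ 2) = 0 := by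
  have hDX : ∀ X i, D X i = (ricciMatrix m u v w x *ᵥ X) i - c * X i := by
    intro X i
    rw [← toLin'_apply, ← hRic.eq_toLin', hc]
    simp
  have e012 := congrFun (hD (E 0) (E 1)) 2
  have e023 := congrFun (hD (E 0) (E 2)) 3
  have e032 := congrFun (hD (E 0) (E 3)) 2
  have e033 := congrFun (hD (E 0) (E 3)) 3
  have e034 := congrFun (hD (E 0) (E 3)) 4
  simp only [hDX, mulVec, dotProduct, ricciMatrix, of_apply, cons_val', cons_val_fin_one, cons_val,
    cons_val_one, cons_val_zero, br_apply, E_apply, Fin.reduceEq, ↓reduceIte, Fin.sum_univ_five,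
    Pi.add_apply, Fin.isValue, mul_ite, Finset.sum_ite_eq', Finset.mem_univ, mul_one, mul_zero, one_mul,
    sub_zero, sub_self, ite_self, add_zero, zero_add, one_ne_zero, zero_ne_one]
    at e012 e023 e032 e033 e034
  refine ⟨?_, ?_, ?_, ?_, ?_⟩
  · linear_combination e032
  · linear_combination e033
  · linear_combination 2 * e012
  · linear_combination 2 * e023
  · linear_combination 2 * e034

lemma soliton_params_of_equations {c : ℝ} (hm : 0 < m) (hv : 0 < v) (hx : 0 < x)
    (h1 : m * u * x = 0) (h2 : v * w * x = 0) (h3 : m * (2 * c + 3 * m ^ 2 + 3 * u ^ 2 + x ^ 2) = 0)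
    (h4 : v * (2 * c + u ^ 2 + 3 * v ^ 2 + 3 * w ^ 2) = 0)
    (h5 : x * (2 * c + m ^ 2 + 3 * u ^ 2 + 3 * w ^ 2 + 3 * x ^ 2) = 0) :
    x = m ∧ u = 0 ∧ w = 0 ∧ v ^ 2 = 4 / 3 * m ^ 2 ∧ c = -2 * m ^ 2 := by
  obtain rfl : u = 0 := by simpa [hm.ne', hx.ne'] using h1
  obtain rfl : w = 0 := by simpa [hv.ne', hx.ne'] using h2
  simp only [mul_eq_zero, hm.ne', hv.ne', hx.ne', false_or] at h3 h4 h5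
  have hxm : x ^ 2 = m ^ 2 := by linarith
  refine ⟨(pow_left_inj₀ hx.le hm.le two_ne_zero).mp hxm, rfl, rfl, by linarith, by linarith⟩

lemma isDerivation_toLin'_diagonal (d : Fin 5 → ℝ) (h2 : d 2 = d 0 + d 1) (h3 : d 3 = d 0 + d 2)
    (h4 : d 4 = d 0 + d 3) : IsDerivation (br m 0 v 0 x) (toLin' (diagonal d)) := by
  intro X Y
  funext k
  fin_cases k <;> simp [mulVec_diagonal, br_apply, h2, h3, h4] <;> ring

lemma ricciMatrix_eq_diagonal (hv : v ^ 2 = 4 / 3 * m ^ 2) :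
    ricciMatrix m 0 v 0 m =
      diagonal (fun i => -2 * m ^ 2 + m ^ 2 / 6 * ![2, 9, 11, 13, 15] i) := by
  ext i j
  fin_cases i <;> fin_cases j <;> simp [ricciMatrix] <;> linarith

lemma IsRicci.exists_isDerivation {Ric : V →ₗ[ℝ] V} (hRic : IsRicci (br m 0 v 0 m) Ric)
    (hv : v ^ 2 = 4 / 3 * m ^ 2) :
    ∃ D, IsDerivation (br m 0 v 0 m) D ∧ Ric = (-2 * m ^ 2) • LinearMap.id + D := by
  refine ⟨toLin' (diagonal fun i => m ^ 2 / 6 * ![2, 9, 11, 13, 15] i),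
    isDerivation_toLin'_diagonal _ (by simp only [cons_val]; ring) (by simp only [cons_val]; ring)
      (by simp only [cons_val]; ring), ?_⟩
  rw [hRic.eq_toLin', ricciMatrix_eq_diagonal hv]
  refine LinearMap.ext fun X => funext fun i => ?_
  simp only [toLin'_apply, mulVec_diagonal, LinearMap.add_apply, LinearMap.smul_apply,
    LinearMap.id_apply, Pi.add_apply, Pi.smul_apply, smul_eq_mul]
  ring

lemma IsRicci.soliton_params {Ric D : V →ₗ[ℝ] V} {c : ℝ} (hm : 0 < m) (hv : 0 < v) (hx : 0 < x)
    (hRic : IsRicci (br m u v w x) Ric) (hD : IsDerivation (br m u v w x) D)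
    (hc : Ric = c • LinearMap.id + D) :
    x = m ∧ u = 0 ∧ w = 0 ∧ v ^ 2 = 4 / 3 * m ^ 2 ∧ c = -2 * m ^ 2 := by
  obtain ⟨h1, h2, h3, h4, h5⟩ := hD.soliton_equations hRic hc
  exact soliton_params_of_equations hm hv hx h1 h2 h3 h4 h5

end Bracket

theorem stmt5_general (m u v w x : ℝ) (hm : 0 < m) (hv : 0 < v) (hx : 0 < x)
    (Ric : V →ₗ[ℝ] V) (hRic : IsRicci (br m u v w x) Ric) :
    ((∃ (c : ℝ) (D : V →ₗ[ℝ] V), IsDerivation (br m u v w x) D ∧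
        Ric = c • (LinearMap.id : V →ₗ[ℝ] V) + D) ↔ (x = m ∧ u = 0 ∧ w = 0 ∧ v = (2 / Real.sqrt 3) * m)) ∧
    (∀ (c : ℝ) (D : V →ₗ[ℝ] V), IsDerivation (br m u v w x) D →
        Ric = c • (LinearMap.id : V →ₗ[ℝ] V) + D → c = -2 * m ^ 2) := by
  refine ⟨⟨?_, ?_⟩, fun c D hD hc => (hRic.soliton_params hm hv hx hD hc).2.2.2.2⟩
  · rintro ⟨c, D, hD, hc⟩
    obtain ⟨hxm, hu, hw, hvm, -⟩ := hRic.soliton_params hm hv hx hD hc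
    exact ⟨hxm, hu, hw, (eq_two_div_sqrt_three_mul_iff hv.le hm.le).mpr hvm⟩
  · rintro ⟨rfl, rfl, rfl, hvm⟩
    exact ⟨_, hRic.exists_isDerivation ((eq_two_div_sqrt_three_mul_iff hv.le hx.le).mp hvm)⟩

theorem stmt5 (m u v w x : ℝ) (hm : 0 < m) (hv : 0 < v) (hx : 0 < x) (hw : 0 ≤ w)
    (Ric : V →ₗ[ℝ] V) (hRic : IsRicci (br m u v w x) Ric) :
    ((∃ (c : ℝ) (D : V →ₗ[ℝ] V), IsDerivation (br m u v w x) D ∧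
        Ric = c • (LinearMap.id : V →ₗ[ℝ] V) + D) ↔ (x = m ∧ u = 0 ∧ w = 0 ∧ v = (2 / Real.sqrt 3) * m)) ∧
    (∀ (c : ℝ) (D : V →ₗ[ℝ] V), IsDerivation (br m u v w x) D →
        Ric = c • (LinearMap.id : V →ₗ[ℝ] V) + D → c = -2 * m ^ 2) :=
  stmt5_general m u v w x hm hv hx Ric hRic

end

end Nilsoliton5
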